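/- arXiv:1401.1609 — 2 statements merged into one kernel-verified Lean document; each statement's English description precedes it below -/
import Mathlib

section
/- (Lemma 4.2, isotropic case) Assume W is isotropic so that Q₃(F) = μ|sym F|² + λ|tr F|². Then M_A = (μ/2)|A^{−1}e₃|² Id₃ + (λ + μ/2)(A^{−1}e₃ ⊗ A^{−1}e₃), and, denoting D = A^{−1}F*₂ₓ₂A^{−1} and d = A^{−1}e₃, for every symmetric F₂ₓ₂ ∈ ℝ^{2×2}: Q₂(x', F₂ₓ₂) = μ( |D|² − 2|Dd|²/|d|² + ⟨Dd, d⟩²/|d|⁴ ) + (λμ/(λ+μ))( tr D − ⟨Dd, d⟩/|d|² )². -/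
open MeasureTheory Filter
open scoped Matrix Topology

noncomputable section

attribute [local instance] Matrix.frobeniusNormedAddCommGroup Matrix.frobeniusNormedSpace

abbrev V2 : Type := Fin 2 → ℝ
abbrev V3 : Type := Fin 3 → ℝ
abbrev M3 : Type := Matrix (Fin 3) (Fin 3) ℝ
abbrev M2 : Type := Matrix (Fin 2) (Fin 2) ℝ
abbrev M32 : Type := Matrix (Fin 3) (Fin 2) ℝ

/-- The special orthogonal group `SO(3)` as a set of `3 × 3` matrices. -/
def SO3 : Set M3 := {R | R.transpose * R = 1 ∧ R.det = 1}

/-- The principal `2 × 2` minor of a `3 × 3` matrix. -/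
def sub2 (F : M3) : M2 := Matrix.of fun i j => F i.castSucc j.castSucc

/-- The `3 × 3` matrix with principal `2 × 2` minor equal to `F` and all other entries `0`. -/
def ext2 (F : M2) : M3 :=
  Matrix.of fun i j =>
    if hi : (i : ℕ) < 2 then (if hj : (j : ℕ) < 2 then F ⟨i, hi⟩ ⟨j, hj⟩ else 0) else 0

/-- Symmetric part of a `3 × 3` matrix. -/
def symM (F : M3) : M3 := (1/2 : ℝ) • (F + F.transpose)

/-- Symmetric part of a `2 × 2` matrix. -/
def symM2 (F : M2) : M2 := (1/2 : ℝ) • (F + F.transpose)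

/-- The third coordinate vector `e₃`. -/
def e3 : V3 := Pi.single 2 1

/-- The thin plate `Ω^h = Ω × (-h/2, h/2)`. -/
def cyl (Ω : Set V2) (h : ℝ) : Set V3 :=
  {x | ![x 0, x 1] ∈ Ω ∧ x 2 ∈ Set.Ioo (-(h/2)) (h/2)}

/-- The gradient of a map `ℝ² → ℝ³`, as a `3 × 2` matrix field. -/
def grad32 (y : V2 → V3) (x : V2) : M32 :=
  Matrix.of fun i j => fderiv ℝ y x (Pi.single j 1) i

/-- The gradient of a map `ℝ³ → ℝ³`, as a `3 × 3` matrix field. -/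
def grad33 (u : V3 → V3) (x : V3) : M3 :=
  Matrix.of fun i j => fderiv ℝ u x (Pi.single j 1) i

/-- The Euclidean norm on `ℝ³`. -/
def enorm3 (v : V3) : ℝ := Real.sqrt (∑ i, (v i)^2)

/-- The unit normal `N = ∂₁y × ∂₂y / |∂₁y × ∂₂y|` to the surface `y(Ω)`. -/
def normalVec (y : V2 → V3) (x : V2) : V3 :=
  (enorm3 (crossProduct (fun i => grad32 y x i 0) (fun i => grad32 y x i 1)))⁻¹ •
    crossProduct (fun i => grad32 y x i 0) (fun i => grad32 y x i 1)

/-- The Cosserat vector `b = (∇y)(G₂ₓ₂)⁻¹(G₁₃,G₂₃)ᵀ + (√det G/√det G₂ₓ₂) N`. -/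
def cosserat (G : V2 → M3) (y : V2 → V3) (x : V2) : V3 :=
  (grad32 y x).mulVec ((sub2 (G x))⁻¹.mulVec ![G x 0 2, G x 1 2]) +
    (Real.sqrt (G x).det / Real.sqrt (sub2 (G x)).det) • normalVec y x

/-- The non-Euclidean elastic energy `E^h(u) = (1/h) ∫_{Ω^h} W(∇u A⁻¹)`. -/
def energy (W : M3 → ℝ) (A : V2 → M3) (Ω : Set V2) (h : ℝ) (u : V3 → V3) : ℝ :=
  (1/h) * ∫ x in cyl Ω h, W (grad33 u x * (A ![x 0, x 1])⁻¹)

/-- The quadratic form `Q₃(F) = D²W(Id)(F,F)`. -/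
def Q3 (W : M3 → ℝ) (F : M3) : ℝ := iteratedFDeriv ℝ 2 W 1 ![F, F]

/-- The reduced quadratic form
`Q₂(A, F₂ₓ₂) = min { Q₃(A⁻¹ F̃ A⁻¹) : F̃ ∈ ℝ³ˣ³, F̃₂ₓ₂ = F₂ₓ₂ }` (here `A = √G(x')`). -/
def Q2 (W : M3 → ℝ) (A : M3) (F2 : M2) : ℝ :=
  sInf {q | ∃ Ft : M3, sub2 Ft = F2 ∧ q = Q3 W (A⁻¹ * Ft * A⁻¹)}

/-- The limiting Kirchhoff-type bending functional
`I_G(y) = (1/24) ∫_Ω Q₂(x', (∇y)ᵀ ∇b) dx'`. -/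
def IG (W : M3 → ℝ) (G : V2 → M3) (A : V2 → M3) (Ω : Set V2) (y : V2 → V3) : ℝ :=
  (1/24) * ∫ x in Ω, Q2 W (A x) ((grad32 y x).transpose * grad32 (cosserat G y) x)

/-- Membership in `W^{1,2}(U, E)`: the map and its gradient are square integrable on `U`. -/
def MemW12 {k : ℕ} {E : Type} [NormedAddCommGroup E] [NormedSpace ℝ E]
    (U : Set (Fin k → ℝ)) (u : (Fin k → ℝ) → E) : Prop :=
  MemLp u 2 (volume.restrict U) ∧ MemLp (fun x => fderiv ℝ u x) 2 (volume.restrict U)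

/-- Membership in `W^{2,2}(U, E)`. -/
def MemW22 {k : ℕ} {E : Type} [NormedAddCommGroup E] [NormedSpace ℝ E]
    (U : Set (Fin k → ℝ)) (u : (Fin k → ℝ) → E) : Prop :=
  MemW12 U u ∧ MemLp (fun x => fderiv ℝ (fderiv ℝ u) x) 2 (volume.restrict U)

/-- Strong convergence in `W^{1,2}(U, E)` of a sequence of maps. -/
def TendstoW12 {k : ℕ} {E : Type} [NormedAddCommGroup E] [NormedSpace ℝ E]
    (U : Set (Fin k → ℝ)) (f : ℕ → (Fin k → ℝ) → E) (g : (Fin k → ℝ) → E) : Prop :=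
  Tendsto (fun n => ∫ x in U, (‖f n x - g x‖^2 + ‖fderiv ℝ (f n) x - fderiv ℝ g x‖^2))
    atTop (𝓝 0)

/-- Admissible stored-energy density: `C²` near `SO(3)`, nonnegative, frame indifferent,
vanishing on `SO(3)`, and nondegenerate. -/
def isAdmissibleW (W : M3 → ℝ) : Prop :=
  (∃ U : Set M3, IsOpen U ∧ SO3 ⊆ U ∧ ContDiffOn ℝ 2 W U) ∧
  (∀ F, 0 ≤ W F) ∧ (∀ R ∈ SO3, W R = 0) ∧
  (∀ R ∈ SO3, ∀ F, W (R * F) = W F) ∧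
  (∃ c > 0, ∀ F, c * (Metric.infDist F SO3)^2 ≤ W F)

/-- `G` is a smooth field of symmetric positive definite matrices on `Ω̄`. -/
def isMetricOn (Ω : Set V2) (G : V2 → M3) : Prop :=
  (∀ i j, ContDiffOn ℝ (⊤ : ℕ∞) (fun x => G x i j) (closure Ω)) ∧
  (∀ x ∈ closure Ω, (G x).IsSymm ∧ (G x).PosDef)

/-- `A` is the symmetric positive definite square root of `G` on `Ω̄`. -/
def isSqrtOn (Ω : Set V2) (G A : V2 → M3) : Prop :=
  ∀ x ∈ closure Ω, (A x).IsSymm ∧ (A x).PosDef ∧ A x * A x = G x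

/-- `Ω` has smooth boundary: near each boundary point, `Ω` is the sublevel set of a smooth
function with nonvanishing gradient. -/
def HasSmoothBoundary (Ω : Set V2) : Prop :=
  ∀ p ∈ frontier Ω, ∃ (U : Set V2) (f : V2 → ℝ), IsOpen U ∧ p ∈ U ∧
    ContDiff ℝ (⊤ : ℕ∞) f ∧ (∀ q ∈ U, (q ∈ Ω ↔ f q < 0)) ∧
    ∀ q ∈ U, f q = 0 → fderiv ℝ f q ≠ 0

/-- `y` is a `W^{2,2}` isometric immersion of the midplate metric `G₂ₓ₂`. -/
def IsIsometricImmersion (Ω : Set V2) (G : V2 → M3) (y : V2 → V3) : Prop :=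
  MemW22 Ω y ∧
  ∀ᵐ x ∂(volume.restrict Ω), (grad32 y x).transpose * grad32 y x = sub2 (G x)

/-- The infimum of `E^h` over `W^{1,2}` deformations. -/
def infEnergy (W : M3 → ℝ) (A : V2 → M3) (Ω : Set V2) (h : ℝ) : ℝ :=
  sInf {e | ∃ u : V3 → V3, MemW12 (cyl Ω h) u ∧ e = energy W A Ω h u}

/-- Partial derivative `∂_j f` of a scalar function on `ℝ²`. -/
def pdv (j : Fin 2) (f : V2 → ℝ) (x : V2) : ℝ := fderiv ℝ f x (Pi.single j 1)

/-- Partial derivative with three-dimensional index: `∂₃ = 0` since fields are independent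
of `x₃`. -/
def pd3 (j : Fin 3) (f : V2 → ℝ) (x : V2) : ℝ :=
  if h : (j : ℕ) < 2 then pdv ⟨j, h⟩ f x else 0

/-- Second partial derivative `∂_i ∂_j f`. -/
def secondpd (i j : Fin 2) (f : V2 → ℝ) (x : V2) : ℝ := pdv i (pdv j f) x

/-- Gradient of a scalar function on `ℝ²`. -/
def gradV2 (f : V2 → ℝ) (x : V2) : V2 := fun i => pdv i f x

/-- Hessian of a scalar function on `ℝ²`. -/
def hess2 (f : V2 → ℝ) (x : V2) : M2 := Matrix.of fun i j => secondpd i j f x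

/-- Christoffel symbols `Γ^i_{kl}` of the (thickness-independent) metric `G`. -/
def christoffel (G : V2 → M3) (i k l : Fin 3) (x : V2) : ℝ :=
  (1/2) * ∑ m : Fin 3, (G x)⁻¹ i m *
    (pd3 l (fun z => G z m k) x + pd3 k (fun z => G z m l) x - pd3 m (fun z => G z k l) x)

/-- Riemann curvatures `R^s_{ijk}` of the metric `G`. -/
def riemann (G : V2 → M3) (s i j k : Fin 3) (x : V2) : ℝ :=
  pd3 j (christoffel G s i k) x - pd3 k (christoffel G s i j) x +
    ∑ m : Fin 3, (christoffel G s j m x * christoffel G m i k x -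
      christoffel G s k m x * christoffel G m i j x)

/-- Covariant Riemann curvatures `R_{sijk} = Σ_m G_{sm} R^m_{ijk}`. -/
def riemannLow (G : V2 → M3) (s i j k : Fin 3) (x : V2) : ℝ :=
  ∑ m : Fin 3, G x s m * riemann G m i j k x

/-- Christoffel symbols of a two-dimensional metric `g`. -/
def christoffel2 (g : V2 → M2) (i k l : Fin 2) (x : V2) : ℝ :=
  (1/2) * ∑ m : Fin 2, (g x)⁻¹ i m *
    (pdv l (fun z => g z m k) x + pdv k (fun z => g z m l) x - pdv m (fun z => g z k l) x)

/-- Riemann curvatures of a two-dimensional metric `g`. -/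
def riemann2 (g : V2 → M2) (s i j k : Fin 2) (x : V2) : ℝ :=
  pdv j (christoffel2 g s i k) x - pdv k (christoffel2 g s i j) x +
    ∑ m : Fin 2, (christoffel2 g s j m x * christoffel2 g m i k x -
      christoffel2 g s k m x * christoffel2 g m i j x)

/-- Gaussian curvature `κ(g) = R_{1212}/det g` of a two-dimensional metric `g`. -/
def gaussCurv (g : V2 → M2) (x : V2) : ℝ :=
  (∑ m : Fin 2, g x 0 m * riemann2 g m 1 0 1 x) / (g x).det

/-- `curlᵀ curl F = ∂₂₂F₁₁ − 2∂₁₂F₁₂ + ∂₁₁F₂₂` of a symmetric `2 × 2` matrix field. -/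
def curlTcurl (F : V2 → M2) (x : V2) : ℝ :=
  secondpd 1 1 (fun z => F z 0 0) x - 2 * secondpd 0 1 (fun z => F z 0 1) x +
    secondpd 0 0 (fun z => F z 1 1) x

/-- Second fundamental form `Π = (∇y)ᵀ ∇N` of the surface `y(Ω)`. -/
def secondFF (y : V2 → V3) (x : V2) : M2 :=
  (grad32 y x).transpose * grad32 (normalVec y) x

/-- The `3 × 3` matrix `Q = [∂₁y, ∂₂y, b]`. -/
def Qmat3 (y : V2 → V3) (b : V2 → V3) (x : V2) : M3 :=
  Matrix.of fun i j => ![grad32 y x i 0, grad32 y x i 1, b x i] j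

/-- The isotropic reduced quadratic form `Q⁰₂,iso(F) = μ|sym F|² + (λμ/(λ+μ))(tr F)²`. -/
def Q2iso (mu la : ℝ) (F : M2) : ℝ :=
  mu * ‖symM2 F‖^2 + (la * mu / (la + mu)) * (F.trace)^2

/-! Every `F̃` with `F̃₂ₓ₂ = F₂ₓ₂` has the form `F*₂ₓ₂ + a ⊗ e₃ + e₃ ⊗ b`, so for symmetric `A`
we get `A⁻¹F̃A⁻¹ = D + a' ⊗ d + d ⊗ b'` with `d = A⁻¹e₃`. The isotropic `Q₃` only sees the
symmetric part and the trace, hence depends on `a' + b'` alone, and `Q₂` becomes the minimum of the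
convex quadratic `c ↦ Q₃(D + c ⊗ d)` over `c ∈ ℝ³`. Completing the square around its critical
point gives the formula. `M_A` is read off from `L₃(u ⊗ d) d = (μ/2)|d|² u + (λ + μ/2)(u·d) d`. -/

open Matrix

theorem frobenius_norm_sq_eq_sum {m n : Type*} [Fintype m] [Fintype n] (M : Matrix m n ℝ) :
    ‖M‖ ^ 2 = ∑ i, ∑ j, M i j ^ 2 := by
  rw [frobenius_norm_def, ← Real.rpow_natCast, ← Real.rpow_mul (by positivity)]
  norm_num

theorem mul_vecMulVec_mul {l m n o α : Type*} [Fintype m] [Fintype n] [CommSemiring α]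
    (M : Matrix l m α) (u : m → α) (v : n → α) (N : Matrix n o α) :
    M * vecMulVec u v * N = vecMulVec (M *ᵥ u) (Nᵀ *ᵥ v) := by
  rw [mul_vecMulVec, vecMulVec_mul, mulVec_transpose]

theorem symM_add (F G : M3) : symM (F + G) = symM F + symM G := by
  simp only [symM, transpose_add, smul_add]
  abel

theorem symM_vecMulVec_comm (u v : V3) : symM (vecMulVec u v) = symM (vecMulVec v u) := by
  simp only [symM, transpose_vecMulVec, add_comm]

theorem sub2_add (F G : M3) : sub2 (F + G) = sub2 F + sub2 G := rfl

theorem sub2_ext2 (F : M2) : sub2 (ext2 F) = F := by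
  ext i j; fin_cases i <;> fin_cases j <;> rfl

theorem sub2_vecMulVec_e3 (a : V3) : sub2 (vecMulVec a e3) = 0 := by
  ext i j; fin_cases i <;> fin_cases j <;> simp [sub2, e3, vecMulVec_apply]

theorem sub2_e3_vecMulVec (b : V3) : sub2 (vecMulVec e3 b) = 0 := by
  ext i j; fin_cases i <;> fin_cases j <;> simp [sub2, e3, vecMulVec_apply]

theorem sub2_eq_iff {Ft : M3} {F : M2} :
    sub2 Ft = F ↔ ∃ a b : V3, Ft = ext2 F + vecMulVec a e3 + vecMulVec e3 b := by
  constructor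
  · rintro rfl
    refine ⟨fun i => Ft i 2, ![Ft 2 0, Ft 2 1, 0], ?_⟩
    ext i j
    fin_cases i <;> fin_cases j <;> simp [sub2, ext2, e3, vecMulVec_apply]
  · rintro ⟨a, b, rfl⟩
    simp [sub2_add, sub2_ext2, sub2_vecMulVec_e3, sub2_e3_vecMulVec]

theorem ext2_isSymm {F : M2} (hF : F.IsSymm) : (ext2 F).IsSymm := by
  refine IsSymm.ext fun i j => ?_
  fin_cases i <;> fin_cases j <;> simp [ext2, hF.apply]

def isoStress (mu la : ℝ) (F : M3) : M3 := mu • symM F + (la * F.trace) • (1 : M3)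

def Q3iso (mu la : ℝ) (F : M3) : ℝ := mu * ‖symM F‖ ^ 2 + la * F.trace ^ 2

/-- The critical point of `c ↦ Q3iso mu la (D + c ⊗ d)`: the gradient equation
`μ (2 D d + |d|² c + (c·d) d) + 2λ (tr D + c·d) d = 0` puts `c` in the span of `D d` and `d`. -/
def Q3isoMinimizer (mu la : ℝ) (D : M3) (d : V3) : V3 :=
  (-2 / (d ⬝ᵥ d)) • (D *ᵥ d) +
    (((mu + 2 * la) * ((D *ᵥ d) ⬝ᵥ d) / (d ⬝ᵥ d) - la * D.trace) / ((mu + la) * (d ⬝ᵥ d))) • d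

def Q3isoMin (mu la : ℝ) (D : M3) (d : V3) : ℝ :=
  mu * (‖D‖ ^ 2 - 2 * ((D *ᵥ d) ⬝ᵥ (D *ᵥ d)) / (d ⬝ᵥ d) + ((D *ᵥ d) ⬝ᵥ d) ^ 2 / (d ⬝ᵥ d) ^ 2) +
    (la * mu / (la + mu)) * (D.trace - (D *ᵥ d) ⬝ᵥ d / (d ⬝ᵥ d)) ^ 2

section Isotropic

variable {mu la : ℝ}

theorem isoStress_vecMulVec_mulVec (u d : V3) :
    isoStress mu la (vecMulVec u d) *ᵥ d =
      ((mu / 2) * (d ⬝ᵥ d)) • u + ((la + mu / 2) * (u ⬝ᵥ d)) • d := by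
  simp only [isoStress, symM, transpose_vecMulVec, add_mulVec, smul_mulVec, vecMulVec_mulVec,
    one_mulVec, trace_vecMulVec, op_smul_eq_smul]
  module

theorem eq_of_mulVec_single_eq_isoStress {MA : M3} {d : V3}
    (hMA : ∀ i, MA *ᵥ Pi.single i 1 = isoStress mu la (vecMulVec (Pi.single i 1) d) *ᵥ d) :
    MA = ((mu / 2) * (d ⬝ᵥ d)) • (1 : M3) + (la + mu / 2) • vecMulVec d d := by
  refine ext_of_mulVec_single fun i => ?_
  rw [hMA, isoStress_vecMulVec_mulVec]
  simp only [add_mulVec, smul_mulVec, one_mulVec, vecMulVec_mulVec, op_smul_eq_smul,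
    dotProduct_single_one, single_one_dotProduct]
  module

theorem Q3iso_add_vecMulVec_add_vecMulVec (D : M3) (a b d : V3) :
    Q3iso mu la (D + vecMulVec a d + vecMulVec d b) = Q3iso mu la (D + vecMulVec (a + b) d) := by
  simp only [Q3iso, symM_add, trace_add, trace_vecMulVec, add_vecMulVec,
    symM_vecMulVec_comm d b, dotProduct_comm d b, add_assoc]

theorem Q3iso_add_vecMulVec {D : M3} (hD : D.IsSymm) (c d : V3) :
    Q3iso mu la (D + vecMulVec c d) =
      mu * (‖D‖ ^ 2 + 2 * (c ⬝ᵥ D *ᵥ d) + ((c ⬝ᵥ c) * (d ⬝ᵥ d) + (c ⬝ᵥ d) ^ 2) / 2) +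
        la * (D.trace + c ⬝ᵥ d) ^ 2 := by
  have h10 : D 1 0 = D 0 1 := hD.apply 0 1
  have h20 : D 2 0 = D 0 2 := hD.apply 0 2
  have h21 : D 2 1 = D 1 2 := hD.apply 1 2
  simp only [Q3iso, frobenius_norm_sq_eq_sum, symM, trace, diag, Matrix.smul_apply,
    Matrix.add_apply, transpose_apply, vecMulVec_apply, mulVec, dotProduct, Fin.sum_univ_three,
    smul_eq_mul]
  rw [h10, h20, h21]
  ring

theorem Q3iso_add_vecMulVec_eq_Q3isoMin_add {D : M3} (hD : D.IsSymm) {d : V3}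
    (hd : d ⬝ᵥ d ≠ 0) (hml : mu + la ≠ 0) (w : V3) :
    Q3iso mu la (D + vecMulVec (Q3isoMinimizer mu la D d + w) d) = Q3isoMin mu la D d +
      ((mu / 2) * ((w ⬝ᵥ w) * (d ⬝ᵥ d) + (w ⬝ᵥ d) ^ 2) + la * (w ⬝ᵥ d) ^ 2) := by
  have hsymm : d ⬝ᵥ D *ᵥ d = (D *ᵥ d) ⬝ᵥ d := by
    rw [dotProduct_mulVec, ← mulVec_transpose, hD.eq, dotProduct_comm]
  have hlm : la + mu ≠ 0 := by rwa [add_comm]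
  rw [Q3iso_add_vecMulVec hD]
  simp only [Q3isoMinimizer, Q3isoMin, add_dotProduct, dotProduct_add, smul_dotProduct,
    dotProduct_smul, smul_eq_mul, hsymm, dotProduct_comm w]
  field_simp
  ring

theorem isLeast_Q3iso_add_vecMulVec (hmu : 0 ≤ mu) (hla : 0 ≤ la) (hml : 0 < mu + la)
    {D : M3} (hD : D.IsSymm) {d : V3} (hd : d ≠ 0) :
    IsLeast (Set.range fun c => Q3iso mu la (D + vecMulVec c d)) (Q3isoMin mu la D d) := by
  have hdd : d ⬝ᵥ d ≠ 0 := by rwa [Ne, dotProduct_self_eq_zero]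
  refine ⟨⟨Q3isoMinimizer mu la D d, ?_⟩, ?_⟩
  · simpa using Q3iso_add_vecMulVec_eq_Q3isoMin_add hD hdd hml.ne' 0
  · rintro _ ⟨c, rfl⟩
    dsimp only
    rw [← add_sub_cancel (Q3isoMinimizer mu la D d) c,
      Q3iso_add_vecMulVec_eq_Q3isoMin_add hD hdd hml.ne']
    have hww : 0 ≤ (c - Q3isoMinimizer mu la D d) ⬝ᵥ (c - Q3isoMinimizer mu la D d) :=
      Finset.sum_nonneg fun i _ => mul_self_nonneg _
    have hdd' : 0 ≤ d ⬝ᵥ d := Finset.sum_nonneg fun i _ => mul_self_nonneg _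
    refine le_add_of_nonneg_right ?_
    positivity

theorem Q2_eq_Q3isoMin {W : M3 → ℝ} (hQ3 : ∀ F, Q3 W F = Q3iso mu la F)
    (hmu : 0 ≤ mu) (hla : 0 ≤ la) (hml : 0 < mu + la) {A : M3} (hA : IsUnit A.det)
    (hAs : A.IsSymm) {F2 : M2} (hF2 : F2.IsSymm) :
    Q2 W A F2 = Q3isoMin mu la (A⁻¹ * ext2 F2 * A⁻¹) (A⁻¹ *ᵥ e3) := by
  set D := A⁻¹ * ext2 F2 * A⁻¹
  set d := A⁻¹ *ᵥ e3
  have hB : A⁻¹ᵀ = A⁻¹ := hAs.inv.eq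
  have hD : D.IsSymm := by simp [D, IsSymm, transpose_mul, hB, (ext2_isSymm hF2).eq, mul_assoc]
  have hd : d ≠ 0 := by
    intro hd0
    have : A *ᵥ d = e3 := by simp [d, mul_nonsing_inv A hA]
    simpa [hd0, e3] using congrFun this 2
  have hconj (a b : V3) : A⁻¹ * (ext2 F2 + vecMulVec a e3 + vecMulVec e3 b) * A⁻¹ =
      D + vecMulVec (A⁻¹ *ᵥ a) d + vecMulVec d (A⁻¹ *ᵥ b) := by
    simp only [Matrix.mul_add, Matrix.add_mul, mul_vecMulVec_mul, hB, D, d]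
  have hleast := isLeast_Q3iso_add_vecMulVec hmu hla hml hD hd
  rw [Q2, funext hQ3]
  refine IsLeast.csInf_eq ⟨?_, ?_⟩
  · obtain ⟨c, hc⟩ := hleast.1
    refine ⟨ext2 F2 + vecMulVec (A *ᵥ c) e3 + vecMulVec e3 0, sub2_eq_iff.2 ⟨_, _, rfl⟩, ?_⟩
    rw [hconj, mulVec_mulVec, nonsing_inv_mul A hA, one_mulVec]
    simpa using hc.symm
  · rintro _ ⟨Ft, hFt, rfl⟩
    obtain ⟨a, b, rfl⟩ := sub2_eq_iff.1 hFt
    rw [hconj, Q3iso_add_vecMulVec_add_vecMulVec]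
    exact hleast.2 ⟨_, rfl⟩

end Isotropic

theorem Q2_isotropic_formula_general
    (W : M3 → ℝ)
    (mu la : ℝ) (hmu : 0 < mu) (hla : 0 ≤ la)
    (hQ3 : ∀ F : M3, Q3 W F = mu * ‖symM F‖^2 + la * (Matrix.trace F)^2)
    (L3 : M3 → M3) (hL3 : ∀ F : M3, L3 F = mu • symM F + (la * Matrix.trace F) • (1 : M3))
    (A : M3) (hApos : A.PosDef)
    (MA : M3)
    (hMA : ∀ i : Fin 3, MA.mulVec (Pi.single i 1) =
      (L3 (Matrix.vecMulVec (Pi.single i 1) (A⁻¹.mulVec e3))).mulVec (A⁻¹.mulVec e3))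
    (F2 : M2) (hF2 : F2.IsSymm) :
    let d : V3 := A⁻¹.mulVec e3
    let D : M3 := A⁻¹ * ext2 F2 * A⁻¹
    MA = ((mu/2) * dotProduct d d) • (1 : M3) +
        (la + mu/2) • Matrix.vecMulVec d d ∧
    Q2 W A F2 =
      mu * (‖D‖^2 - 2 * dotProduct (D.mulVec d) (D.mulVec d) / dotProduct d d
        + (dotProduct (D.mulVec d) d)^2 / (dotProduct d d)^2) +
      (la * mu / (la + mu)) *
        (Matrix.trace D - dotProduct (D.mulVec d) d / dotProduct d d)^2 := by
  obtain rfl : L3 = isoStress mu la := funext hL3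
  have hA : IsUnit A.det := hApos.det_pos.ne'.isUnit
  have hAs : A.IsSymm := isHermitian_iff_isSymm.mp hApos.isHermitian
  exact ⟨eq_of_mulVec_single_eq_isoStress hMA,
    Q2_eq_Q3isoMin hQ3 hmu.le hla (by positivity) hA hAs hF2⟩

/-- **Lemma 4.2** (isotropic case): the explicit form of `M_A` and of `Q₂` when
`Q₃(F) = μ|sym F|² + λ|tr F|²`. -/
theorem Q2_isotropic_formula
    (W : M3 → ℝ) (hW : isAdmissibleW W)
    (mu la : ℝ) (hmu : 0 < mu) (hla : 0 ≤ la)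
    (hQ3 : ∀ F : M3, Q3 W F = mu * ‖symM F‖^2 + la * (Matrix.trace F)^2)
    (L3 : M3 → M3) (hL3 : ∀ F : M3, L3 F = mu • symM F + (la * Matrix.trace F) • (1 : M3))
    (A : M3) (hAsymm : A.IsSymm) (hApos : A.PosDef)
    (MA : M3)
    (hMA : ∀ i : Fin 3, MA.mulVec (Pi.single i 1) =
      (L3 (Matrix.vecMulVec (Pi.single i 1) (A⁻¹.mulVec e3))).mulVec (A⁻¹.mulVec e3))
    (F2 : M2) (hF2 : F2.IsSymm) :
    let d : V3 := A⁻¹.mulVec e3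
    let D : M3 := A⁻¹ * ext2 F2 * A⁻¹
    MA = ((mu/2) * dotProduct d d) • (1 : M3) +
        (la + mu/2) • Matrix.vecMulVec d d ∧
    Q2 W A F2 =
      mu * (‖D‖^2 - 2 * dotProduct (D.mulVec d) (D.mulVec d) / dotProduct d d
        + (dotProduct (D.mulVec d) d)^2 / (dotProduct d d)^2) +
      (la * mu / (la + mu)) *
        (Matrix.trace D - dotProduct (D.mulVec d) d / dotProduct d d)^2 :=
  Q2_isotropic_formula_general W mu la hmu hla hQ3 L3 hL3 A hApos MA hMA F2 hF2
end
end

section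
/- (Theorem 4.3) Assume W is isotropic so that Q₃(F) = μ|sym F|² + λ|tr F|². Then for every x' ∈ Ω and every symmetric F₂ₓ₂ ∈ ℝ^{2×2}: Q₂(x', F₂ₓ₂) = μ|√(G₂ₓ₂)^{−1} F₂ₓ₂ √(G₂ₓ₂)^{−1}|² + (λμ/(λ+μ))|tr(√(G₂ₓ₂)^{−1} F₂ₓ₂ √(G₂ₓ₂)^{−1})|², i.e. Q₂(x', F₂ₓ₂) = Q⁰₂,iso(√(G₂ₓ₂)^{−1} F₂ₓ₂ √(G₂ₓ₂)^{−1}). -/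
open MeasureTheory Filter
open scoped Matrix Topology

noncomputable section

attribute [local instance] Matrix.frobeniusNormedAddCommGroup Matrix.frobeniusNormedSpace

/-!
Put `N = A⁻¹ F̃ A⁻¹`, `T = B⁻¹ F₂ B⁻¹` and `K = A ι B⁻¹`, where `ι : ℝ² → ℝ³` is the inclusion.
Then `KᵀK = B⁻¹ (A²)₂ₓ₂ B⁻¹ = 1`, and the constraint `F̃₂ₓ₂ = F₂` reads `Kᵀ N K = T`.
Completing the orthonormal columns of `K` by the unit normal `∝ A⁻¹ e₃` to an orthogonal matrix `R`
and passing to `Rᵀ N R`, which has the same `|sym N|` and `tr N`, reduces the problem to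
`G = Id`: minimise `μ |sym N|² + λ (tr N)²` over `N` with `N₂ₓ₂ = T`. The shear entries only
add nonnegative terms, and in `b = N₃₃` one has
`μ b² + λ (tr T + b)² ≥ λμ/(λ+μ) (tr T)²`, with equality at `b = -λ tr T / (λ+μ)`.
-/

open Matrix

def embed2 : M32 := Matrix.of fun i j => if (i : ℕ) = j then 1 else 0

lemma sub2_eq_transpose_embed2_mul (F : M3) : sub2 F = embed2ᵀ * F * embed2 := by
  ext i j
  fin_cases i <;> fin_cases j <;>
    simp [sub2, embed2, mul_apply, Fin.sum_univ_three]

lemma embed2_transpose_mul_self : embed2ᵀ * embed2 = 1 := by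
  ext i j
  fin_cases i <;> fin_cases j <;> simp [embed2, mul_apply, Fin.sum_univ_three]

lemma embed2_mul_transpose_add_vecMulVec_e3 : embed2 * embed2ᵀ + vecMulVec e3 e3 = 1 := by
  ext i j
  fin_cases i <;> fin_cases j <;> simp [embed2, e3, mul_apply, vecMulVec_apply]

lemma embed2_transpose_mulVec_e3 : embed2ᵀ *ᵥ e3 = 0 := by
  ext i
  fin_cases i <;> simp [embed2, e3, mulVec, dotProduct, Fin.sum_univ_three]

lemma sq_frobenius_norm_eq_sum {m n : Type*} [Fintype m] [Fintype n] (X : Matrix m n ℝ) :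
    ‖X‖ ^ 2 = ∑ i, ∑ j, X i j ^ 2 := by
  rw [frobenius_norm_def, ← Real.sqrt_eq_rpow, Real.sq_sqrt (by positivity)]
  simp only [Real.norm_eq_abs]
  norm_cast
  simp

lemma sq_frobenius_norm_eq_trace {m n : Type*} [Fintype m] [Fintype n] (X : Matrix m n ℝ) :
    ‖X‖ ^ 2 = (Xᵀ * X).trace := by
  rw [sq_frobenius_norm_eq_sum, Finset.sum_comm]
  simp [trace, mul_apply, sq]

/-- The matrix with columns `K₁, K₂, n`. -/
def frameCompletion (K : M32) (n : V3) : M3 := K * embed2ᵀ + vecMulVec n e3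

section frameCompletion

variable {K : M32} {n : V3}

lemma frameCompletion_transpose_mul (hK : Kᵀ * K = 1) (hKn : Kᵀ *ᵥ n = 0) :
    (frameCompletion K n)ᵀ * K = embed2 := by
  have hnK : vecMulVec e3 n * K = 0 := by
    ext i j
    simp [vecMulVec_mul, ← mulVec_transpose, hKn, vecMulVec_apply]
  simp only [frameCompletion, transpose_add, transpose_mul, transpose_transpose,
    transpose_vecMulVec, Matrix.add_mul, Matrix.mul_assoc, hK, Matrix.mul_one, hnK, add_zero]

lemma frameCompletion_transpose_mulVec (hKn : Kᵀ *ᵥ n = 0) (hn : n ⬝ᵥ n = 1) :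
    (frameCompletion K n)ᵀ *ᵥ n = e3 := by
  simp only [frameCompletion, transpose_add, transpose_mul, transpose_transpose,
    transpose_vecMulVec, add_mulVec, ← mulVec_mulVec, hKn, mulVec_zero, vecMulVec_mulVec, hn,
    op_smul_eq_smul, one_smul, zero_add]

lemma frameCompletion_transpose_mul_self (hK : Kᵀ * K = 1) (hKn : Kᵀ *ᵥ n = 0)
    (hn : n ⬝ᵥ n = 1) : (frameCompletion K n)ᵀ * frameCompletion K n = 1 := by
  calc (frameCompletion K n)ᵀ * frameCompletion K n
      = (frameCompletion K n)ᵀ * K * embed2ᵀ + vecMulVec ((frameCompletion K n)ᵀ *ᵥ n) e3 := by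
        rw [← mul_vecMulVec, Matrix.mul_assoc, ← Matrix.mul_add]
        rfl
    _ = 1 := by
        rw [frameCompletion_transpose_mul hK hKn, frameCompletion_transpose_mulVec hKn hn,
          embed2_mul_transpose_add_vecMulVec_e3]

end frameCompletion

lemma exists_orthogonal_transpose_mul_mul_embed2 {A : M3} {B : M2} (hA : Aᵀ = A)
    (hAdet : IsUnit A.det) (hB : Bᵀ = B) (hBdet : IsUnit B.det) (hBB : B * B = sub2 (A * A)) :
    ∃ R : M3, Rᵀ * R = 1 ∧ Rᵀ * A * embed2 = embed2 * B := by
  set K : M32 := A * embed2 * B⁻¹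
  set v : V3 := A⁻¹ *ᵥ e3
  have hv : 0 < v ⬝ᵥ v := by
    refine lt_of_le_of_ne' (Finset.sum_nonneg fun i _ => mul_self_nonneg (v i)) ?_
    have hAv : A *ᵥ v = e3 := by simp [v, mulVec_mulVec, mul_nonsing_inv _ hAdet]
    change v ⬝ᵥ v ≠ 0
    rw [Ne, dotProduct_self_eq_zero]
    rintro hv0
    rw [hv0, mulVec_zero] at hAv
    simpa [e3] using congrFun hAv 2
  have hK : Kᵀ * K = 1 := by
    have hBi : (B⁻¹)ᵀ = B⁻¹ := by rw [transpose_nonsing_inv, hB]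
    calc Kᵀ * K = B⁻¹ * (embed2ᵀ * (A * A) * embed2) * B⁻¹ := by
          simp only [K, transpose_mul, hA, hBi, Matrix.mul_assoc]
      _ = 1 := by
          rw [← sub2_eq_transpose_embed2_mul, ← hBB, ← Matrix.mul_assoc, nonsing_inv_mul _ hBdet,
            Matrix.one_mul, mul_nonsing_inv _ hBdet]
  set n : V3 := (√(v ⬝ᵥ v))⁻¹ • v
  have hKn : Kᵀ *ᵥ n = 0 := by
    simp only [n, K, v, mulVec_smul, transpose_mul, hA, mulVec_mulVec, Matrix.mul_assoc,
      mul_nonsing_inv _ hAdet, Matrix.mul_one]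
    rw [← mulVec_mulVec, embed2_transpose_mulVec_e3, mulVec_zero, smul_zero]
  have hn : n ⬝ᵥ n = 1 := by
    rw [dotProduct_smul, smul_dotProduct, smul_eq_mul, smul_eq_mul, ← mul_assoc,
      ← mul_inv, Real.mul_self_sqrt hv.le, inv_mul_cancel₀ hv.ne']
  refine ⟨frameCompletion K n, frameCompletion_transpose_mul_self hK hKn hn, ?_⟩
  calc (frameCompletion K n)ᵀ * A * embed2 = (frameCompletion K n)ᵀ * K * B := by
        simp only [K, Matrix.mul_assoc, nonsing_inv_mul _ hBdet, Matrix.mul_one]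
    _ = embed2 * B := by rw [frameCompletion_transpose_mul hK hKn]

def isoEnergy (mu la : ℝ) (F : M3) : ℝ := mu * ‖symM F‖ ^ 2 + la * F.trace ^ 2

lemma isoEnergy_conj_of_orthogonal {R : M3} (hR : Rᵀ * R = 1) (mu la : ℝ) (N : M3) :
    isoEnergy mu la (R * N * Rᵀ) = isoEnergy mu la N := by
  have trace_conj : ∀ X : M3, (R * X * Rᵀ).trace = X.trace := fun X => by
    rw [trace_mul_comm, ← Matrix.mul_assoc, hR, Matrix.one_mul]
  have hsym : symM (R * N * Rᵀ) = R * symM N * Rᵀ := by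
    simp only [symM, transpose_mul, transpose_transpose, Matrix.mul_smul, Matrix.smul_mul,
      Matrix.mul_add, Matrix.add_mul, Matrix.mul_assoc]
  have hnorm : ∀ X : M3, ‖R * X * Rᵀ‖ ^ 2 = ‖X‖ ^ 2 := fun X => by
    rw [sq_frobenius_norm_eq_trace, sq_frobenius_norm_eq_trace, ← trace_conj (Xᵀ * X)]
    simp only [transpose_mul, transpose_transpose, Matrix.mul_assoc]
    rw [← Matrix.mul_assoc Rᵀ R, hR, Matrix.one_mul]
  rw [isoEnergy, isoEnergy, hsym, hnorm, trace_conj]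

lemma sq_norm_symM_eq (N : M3) :
    ‖symM N‖ ^ 2 = ‖symM2 (sub2 N)‖ ^ 2 + ((N 0 2 + N 2 0) ^ 2 + (N 1 2 + N 2 1) ^ 2) / 2
      + N 2 2 ^ 2 := by
  simp only [sq_frobenius_norm_eq_sum, Fin.sum_univ_three, Fin.sum_univ_two, symM, symM2, sub2]
  simp only [one_div, Matrix.smul_apply, Matrix.add_apply, transpose_apply, smul_eq_mul, of_apply,
    Fin.castSucc_zero, Fin.castSucc_one]
  ring

lemma trace_eq_trace_sub2_add (N : M3) : N.trace = (sub2 N).trace + N 2 2 := by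
  simp [trace, Fin.sum_univ_three, Fin.sum_univ_two, sub2]

/-- Completing the square in the normal–normal entry `N₃₃`. -/
lemma isoEnergy_eq_Q2iso_sub2_add {mu la : ℝ} (hlm : 0 < la + mu) (N : M3) :
    isoEnergy mu la N = Q2iso mu la (sub2 N)
      + mu * ((N 0 2 + N 2 0) ^ 2 + (N 1 2 + N 2 1) ^ 2) / 2
      + ((la + mu) * N 2 2 + la * (sub2 N).trace) ^ 2 / (la + mu) := by
  rw [isoEnergy, sq_norm_symM_eq, trace_eq_trace_sub2_add, Q2iso]
  field_simp
  ring

lemma sub2_ext2_add_single (T : M2) (c : ℝ) : sub2 (ext2 T + single 2 2 c) = T := by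
  ext i j
  fin_cases i <;> fin_cases j <;> simp [sub2, ext2]

lemma isLeast_isoEnergy_sub2 {mu la : ℝ} (hmu : 0 ≤ mu) (hlm : 0 < la + mu) (T : M2) :
    IsLeast (isoEnergy mu la '' {N | sub2 N = T}) (Q2iso mu la T) := by
  constructor
  · refine ⟨ext2 T + single 2 2 (-(la * T.trace) / (la + mu)), sub2_ext2_add_single _ _, ?_⟩
    have hnormal : (la + mu) * (-(la * T.trace) / (la + mu)) + la * T.trace = 0 := by
      field_simp
      ring
    rw [isoEnergy_eq_Q2iso_sub2_add hlm, sub2_ext2_add_single]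
    simp [ext2, hnormal]
  · rintro _ ⟨N, rfl, rfl⟩
    rw [isoEnergy_eq_Q2iso_sub2_add hlm]
    have hshear : 0 ≤ mu * ((N 0 2 + N 2 0) ^ 2 + (N 1 2 + N 2 1) ^ 2) / 2 := by positivity
    have hnormal : 0 ≤ ((la + mu) * N 2 2 + la * (sub2 N).trace) ^ 2 / (la + mu) :=
      div_nonneg (sq_nonneg _) hlm.le
    linarith

lemma transpose_mul_mul_eq_iff {n R : Type*} [Fintype n] [DecidableEq n] [CommRing R]
    {B : Matrix n n R} (hB : IsUnit B.det) (X Y : Matrix n n R) :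
    Bᵀ * X * B = Y ↔ X = (B⁻¹)ᵀ * Y * B⁻¹ := by
  have hBt : IsUnit Bᵀ.det := by rwa [det_transpose]
  rw [transpose_nonsing_inv]
  constructor
  · rintro rfl
    simp only [Matrix.mul_assoc, nonsing_inv_mul_cancel_left _ _ hBt, mul_nonsing_inv _ hB,
      Matrix.mul_one]
  · rintro rfl
    simp only [Matrix.mul_assoc, mul_nonsing_inv_cancel_left _ _ hBt, nonsing_inv_mul _ hB,
      Matrix.mul_one]

lemma Q2_eq_sInf_isoEnergy {W : M3 → ℝ} {mu la : ℝ} (hQ3 : ∀ F, Q3 W F = isoEnergy mu la F)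
    {A R : M3} {B : M2} (hA : Aᵀ = A) (hAdet : IsUnit A.det) (hR : Rᵀ * R = 1)
    (hBdet : IsUnit B.det) (hRAB : Rᵀ * A * embed2 = embed2 * B) (F2 : M2) :
    Q2 W A F2 = sInf (isoEnergy mu la '' {N | sub2 N = (B⁻¹)ᵀ * F2 * B⁻¹}) := by
  have hRR : ∀ X : M3, R * (Rᵀ * X) = X := fun X => by
    rw [← Matrix.mul_assoc, mul_eq_one_comm.mp hR, Matrix.one_mul]
  have hsurj : ∀ Ft : M3, ∃ N, Ft = A * R * N * Rᵀ * A := fun Ft =>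
    ⟨Rᵀ * A⁻¹ * Ft * A⁻¹ * R, by
      simp only [Matrix.mul_assoc, hRR, mul_nonsing_inv_cancel_left _ _ hAdet,
        nonsing_inv_mul _ hAdet, Matrix.mul_one]⟩
  have hval : ∀ N, Q3 W (A⁻¹ * (A * R * N * Rᵀ * A) * A⁻¹) = isoEnergy mu la N := fun N => by
    rw [hQ3, ← isoEnergy_conj_of_orthogonal hR mu la N]
    simp only [Matrix.mul_assoc, nonsing_inv_mul_cancel_left _ _ hAdet,
      mul_nonsing_inv _ hAdet, Matrix.mul_one]
  have hsub2 : ∀ N, sub2 (A * R * N * Rᵀ * A) = F2 ↔ sub2 N = (B⁻¹)ᵀ * F2 * B⁻¹ := fun N => by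
    have hAR : embed2ᵀ * A * R = Bᵀ * embed2ᵀ := by
      simpa only [transpose_mul, transpose_transpose, hA, Matrix.mul_assoc]
        using congrArg transpose hRAB
    calc sub2 (A * R * N * Rᵀ * A) = F2
        ↔ Bᵀ * sub2 N * B = F2 := by
          rw [sub2_eq_transpose_embed2_mul, sub2_eq_transpose_embed2_mul,
            show embed2ᵀ * (A * R * N * Rᵀ * A) * embed2
              = embed2ᵀ * A * R * N * (Rᵀ * A * embed2) by simp only [Matrix.mul_assoc],
            hAR, hRAB]
          simp only [Matrix.mul_assoc]
      _ ↔ sub2 N = (B⁻¹)ᵀ * F2 * B⁻¹ := transpose_mul_mul_eq_iff hBdet _ _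
  unfold Q2
  congr 1
  ext q
  constructor
  · rintro ⟨Ft, hFt, rfl⟩
    obtain ⟨N, rfl⟩ := hsurj Ft
    exact ⟨N, (hsub2 N).1 hFt, (hval N).symm⟩
  · rintro ⟨N, hN, rfl⟩
    exact ⟨_, (hsub2 N).2 hN, (hval N).symm⟩

theorem Q2_isotropic_via_sqrt_G2_general
    (W : M3 → ℝ)
    (mu la : ℝ) (hmu : 0 < mu) (hla : 0 ≤ la)
    (hQ3 : ∀ F : M3, Q3 W F = mu * ‖symM F‖^2 + la * (Matrix.trace F)^2)
    (Gm : M3)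
    (A : M3) (hAsymm : A.IsSymm) (hApos : A.PosDef) (hAA : A * A = Gm)
    (B2 : M2) (hBsymm : B2.IsSymm) (hBpos : B2.PosDef) (hBB : B2 * B2 = sub2 Gm)
    (F2 : M2) (hF2 : F2.IsSymm) :
    Q2 W A F2 =
      mu * ‖B2⁻¹ * F2 * B2⁻¹‖^2 +
        (la * mu / (la + mu)) * (Matrix.trace (B2⁻¹ * F2 * B2⁻¹))^2 ∧
    Q2 W A F2 = Q2iso mu la (B2⁻¹ * F2 * B2⁻¹) := by
  have hAdet : IsUnit A.det := (isUnit_iff_isUnit_det A).mp hApos.isUnit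
  have hBdet : IsUnit B2.det := (isUnit_iff_isUnit_det B2).mp hBpos.isUnit
  obtain ⟨R, hR, hRAB⟩ :=
    exists_orthogonal_transpose_mul_mul_embed2 hAsymm hAdet hBsymm hBdet (hAA ▸ hBB)
  have hBinv : (B2⁻¹)ᵀ = B2⁻¹ := by rw [transpose_nonsing_inv, hBsymm.eq]
  have hQ2 : Q2 W A F2 = Q2iso mu la (B2⁻¹ * F2 * B2⁻¹) := by
    rw [Q2_eq_sInf_isoEnergy hQ3 hAsymm hAdet hR hBdet hRAB, hBinv,
      (isLeast_isoEnergy_sub2 hmu.le (by linarith) _).csInf_eq]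
  have hsymm : symM2 (B2⁻¹ * F2 * B2⁻¹) = B2⁻¹ * F2 * B2⁻¹ := by
    rw [symM2, transpose_mul, transpose_mul, hBinv, hF2.eq, ← Matrix.mul_assoc, ← two_smul ℝ,
      smul_smul]
    norm_num
  exact ⟨by rw [hQ2, Q2iso, hsymm], hQ2⟩

/-- **Theorem 4.3** (isotropic case): `Q₂(x', F₂ₓ₂) = Q⁰₂,iso(√G₂ₓ₂⁻¹ F₂ₓ₂ √G₂ₓ₂⁻¹)`. -/
theorem Q2_isotropic_via_sqrt_G2
    (W : M3 → ℝ) (hW : isAdmissibleW W)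
    (mu la : ℝ) (hmu : 0 < mu) (hla : 0 ≤ la)
    (hQ3 : ∀ F : M3, Q3 W F = mu * ‖symM F‖^2 + la * (Matrix.trace F)^2)
    (Gm : M3) (hGsymm : Gm.IsSymm) (hGpos : Gm.PosDef)
    (A : M3) (hAsymm : A.IsSymm) (hApos : A.PosDef) (hAA : A * A = Gm)
    (B2 : M2) (hBsymm : B2.IsSymm) (hBpos : B2.PosDef) (hBB : B2 * B2 = sub2 Gm)
    (F2 : M2) (hF2 : F2.IsSymm) :
    Q2 W A F2 =
      mu * ‖B2⁻¹ * F2 * B2⁻¹‖^2 +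
        (la * mu / (la + mu)) * (Matrix.trace (B2⁻¹ * F2 * B2⁻¹))^2 ∧
    Q2 W A F2 = Q2iso mu la (B2⁻¹ * F2 * B2⁻¹) :=
  Q2_isotropic_via_sqrt_G2_general W mu la hmu hla hQ3 Gm A hAsymm hApos hAA B2 hBsymm hBpos hBB F2
    hF2
end
end
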